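/- In the QBF-reduction Stackelberg task for a formula ∃x∀y φ with φ in DNF (leader selects truth values of the x-variables via sel-actions, follower selects y-values and can mark cube i as violated via actions requiring the falsifying literal's assignment), a full leader plan assigning all x-variables makes the follower unable to achieve all cube-markers {c_i} if and only if the chosen x-assignment satisfies ∀y φ. -/

import Mathlib

/-- A STRIPS action: positive preconditions `pre`, negative preconditions `npre`,
add effect `add`, delete effect `del`, and a cost. -/
structure Act (V : Type) where
  pre : Finset V
  npre : Finset V
  add : Finset V
  del : Finset V
  cost : ℕ

variable {V : Type} [DecidableEq V]

/-- An action is applicable in a state iff its precondition holds. -/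
def app (s : Finset V) (a : Act V) : Prop := a.pre ⊆ s ∧ Disjoint a.npre s

/-- Executing an action: s⟦a⟧ = (s \ del(a)) ∪ add(a). -/
def exec (s : Finset V) (a : Act V) : Finset V := (s \ a.del) ∪ a.add

/-- Iterated execution of an action sequence. -/
def execSeq (s : Finset V) : List (Act V) → Finset V
  | [] => s
  | a :: π => execSeq (exec s a) π

/-- Iterated applicability of an action sequence. -/
def appSeq (s : Finset V) : List (Act V) → Prop
  | [] => True
  | a :: π => app s a ∧ appSeq (exec s a) π

/-- The cost of an action sequence. -/
def listCost (π : List (Act V)) : ℕ := (π.map Act.cost).sum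

/-- Facts of the QBF-reduction task: truth/selection facts for x- and y-variables,
and a marker fact per cube. -/
inductive QFact (n m K : ℕ) where
  | Tx : Fin n → QFact n m K
  | Fx : Fin n → QFact n m K
  | Sx : Fin n → QFact n m K
  | Ty : Fin m → QFact n m K
  | Fy : Fin m → QFact n m K
  | Sy : Fin m → QFact n m K
  | C : Fin K → QFact n m K
  deriving DecidableEq

/-- Leader action selecting truth value b for x_i. -/
def selX (n m K : ℕ) (i : Fin n) (b : Bool) : Act (QFact n m K) :=
  { pre := ∅, npre := {QFact.Sx i},
    add := {QFact.Sx i, if b then QFact.Tx i else QFact.Fx i}, del := ∅, cost := 1 }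

/-- Follower action selecting truth value b for y_j. -/
def selY (n m K : ℕ) (j : Fin m) (b : Bool) : Act (QFact n m K) :=
  { pre := ∅, npre := {QFact.Sy j},
    add := {QFact.Sy j, if b then QFact.Ty j else QFact.Fy j}, del := ∅, cost := 1 }

/-- The fact asserting the falsifying assignment for a literal. -/
def falsify (n m K : ℕ) (l : (Fin n ⊕ Fin m) × Bool) : QFact n m K :=
  match l with
  | (Sum.inl i, true) => QFact.Fx i
  | (Sum.inl i, false) => QFact.Tx i
  | (Sum.inr j, true) => QFact.Fy j
  | (Sum.inr j, false) => QFact.Ty j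

/-- Follower action marking cube k as violated via literal l. -/
def valAct (n m K : ℕ) (k : Fin K) (l : (Fin n ⊕ Fin m) × Bool) : Act (QFact n m K) :=
  { pre := {falsify n m K l}, npre := ∅, add := {QFact.C k}, del := ∅, cost := 1 }

/-- Follower actions: y-selection actions and cube-violation actions. -/
def isFollowerAct (n m K : ℕ) (cubes : Fin K → List ((Fin n ⊕ Fin m) × Bool))
    (a : Act (QFact n m K)) : Prop :=
  (∃ j b, a = selY n m K j b) ∨ (∃ k, ∃ l ∈ cubes k, a = valAct n m K k l)

/-- Truth value of a literal under assignments α (to x) and β (to y). -/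
def litVal (n m : ℕ) (α : Fin n → Bool) (β : Fin m → Bool)
    (l : (Fin n ⊕ Fin m) × Bool) : Bool :=
  (match l.1 with | Sum.inl i => α i | Sum.inr j => β j) == l.2

/-!
Follower actions never delete, so the follower's reachable states only grow.  If some `β`
falsifies every cube, the follower selects `β` and then marks each cube through one of its
false literals.  Conversely, along any applicable follower plan the current state is consistent
with `α` and with some `y`-assignment `β` (each `y` is selected at most once, and a cube marker
needs a falsified literal); the final `β` then contradicts a cube that `α, β` satisfy.
-/

lemma exec_of_del_eq_empty {s : Finset V} {a : Act V} (h : a.del = ∅) :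
    exec s a = s ∪ a.add := by
  simp [exec, h]

lemma execSeq_append (s : Finset V) (π₁ π₂ : List (Act V)) :
    execSeq s (π₁ ++ π₂) = execSeq (execSeq s π₁) π₂ := by
  induction π₁ generalizing s with
  | nil => rfl
  | cons a π ih => simp [execSeq, ih]

lemma appSeq_append {s : Finset V} {π₁ π₂ : List (Act V)} :
    appSeq s (π₁ ++ π₂) ↔ appSeq s π₁ ∧ appSeq (execSeq s π₁) π₂ := by
  induction π₁ generalizing s with
  | nil => simp [appSeq, execSeq]
  | cons a π ih => simp [appSeq, execSeq, ih, and_assoc]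

lemma mem_execSeq_of_del_eq_empty {π : List (Act V)} (hdel : ∀ a ∈ π, a.del = ∅)
    {s : Finset V} {x : V} : x ∈ execSeq s π ↔ x ∈ s ∨ ∃ a ∈ π, x ∈ a.add := by
  induction π generalizing s with
  | nil => simp [execSeq]
  | cons a π ih =>
    rw [execSeq, ih fun b hb => hdel b (List.mem_cons_of_mem a hb),
      exec_of_del_eq_empty (hdel a List.mem_cons_self)]
    simp only [Finset.mem_union, List.exists_mem_cons_iff]
    tauto

lemma subset_execSeq_of_del_eq_empty {π : List (Act V)} (hdel : ∀ a ∈ π, a.del = ∅)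
    {s : Finset V} : s ⊆ execSeq s π :=
  fun _ hx => (mem_execSeq_of_del_eq_empty hdel).mpr (.inl hx)

lemma appSeq_of_del_eq_empty {π : List (Act V)} {s : Finset V}
    (hdel : ∀ a ∈ π, a.del = ∅) (hpre : ∀ a ∈ π, a.pre ⊆ s)
    (hnpre : ∀ a ∈ π, Disjoint a.npre s)
    (hindep : π.Pairwise fun a b => Disjoint b.npre a.add) : appSeq s π := by
  induction π generalizing s with
  | nil => trivial
  | cons a π ih =>
    obtain ⟨ha, hπ⟩ := List.pairwise_cons.mp hindep
    refine ⟨⟨hpre a List.mem_cons_self, hnpre a List.mem_cons_self⟩, ?_⟩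
    rw [exec_of_del_eq_empty (hdel a List.mem_cons_self)]
    refine ih (fun b hb => hdel b (List.mem_cons_of_mem a hb))
      (fun b hb => (hpre b (List.mem_cons_of_mem a hb)).trans Finset.subset_union_left)
      (fun b hb => Finset.disjoint_union_right.mpr
        ⟨hnpre b (List.mem_cons_of_mem a hb), ha b hb⟩) hπ

lemma appSeq.invariant (P : Finset V → Prop) (Q : Act V → Prop)
    (hP : ∀ s a, Q a → app s a → P s → P (exec s a)) {π : List (Act V)} {s : Finset V}
    (hs : P s) (happ : appSeq s π) (hQ : ∀ a ∈ π, Q a) : P (execSeq s π) := by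
  induction π generalizing s with
  | nil => exact hs
  | cons a π ih =>
    exact ih (hP s a (hQ a List.mem_cons_self) happ.1 hs) happ.2
      fun b hb => hQ b (List.mem_cons_of_mem a hb)

section QBF

variable {n m K : ℕ}

def FactHolds (α : Fin n → Bool) (β : Fin m → Bool) : QFact n m K → Prop
  | .Tx i => α i = true
  | .Fx i => α i = false
  | .Ty j => β j = true
  | .Fy j => β j = false
  | _ => True

lemma factHolds_falsify_iff {α : Fin n → Bool} {β : Fin m → Bool}
    {l : (Fin n ⊕ Fin m) × Bool} :
    FactHolds (K := K) α β (falsify n m K l) ↔ litVal n m α β l = false := by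
  rcases l with ⟨i | j, _ | _⟩ <;> simp [FactHolds, falsify, litVal]

lemma falsify_mem_of_litVal_eq_false {α : Fin n → Bool} {β : Fin m → Bool}
    {l : (Fin n ⊕ Fin m) × Bool} {s : Finset (QFact n m K)}
    (hα : ∀ i, (if α i then QFact.Tx i else QFact.Fx i) ∈ s)
    (hβ : ∀ j, (if β j then QFact.Ty j else QFact.Fy j) ∈ s)
    (hl : litVal n m α β l = false) : falsify n m K l ∈ s := by
  rcases l with ⟨i | j, _ | _⟩ <;> simp only [litVal, beq_eq_false_iff_ne, ne_eq] at hl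
  · simpa [falsify, hl] using hα i
  · simpa [falsify, hl] using hα i
  · simpa [falsify, hl] using hβ j
  · simpa [falsify, hl] using hβ j

variable (n m K) in
def leaderState (α : Fin n → Bool) : Finset (QFact n m K) :=
  execSeq ∅ (List.ofFn fun i => selX n m K i (α i))

lemma mem_leaderState {α : Fin n → Bool} {x : QFact n m K} :
    x ∈ leaderState n m K α ↔
      ∃ i, x = .Sx i ∨ (x = .Tx i ∧ α i = true) ∨ (x = .Fx i ∧ α i = false) := by
  rw [leaderState, mem_execSeq_of_del_eq_empty (by simp [selX])]
  simp only [Finset.notMem_empty, false_or, List.mem_ofFn, exists_exists_eq_and]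
  refine exists_congr fun i => ?_
  cases α i <;> simp [selX]

/-- `β` records the follower's choices so far; a `y`-value is only ever added together with its
selection fact, and a cube marker only on top of a falsified literal. -/
def FollowerInv (cubes : Fin K → List ((Fin n ⊕ Fin m) × Bool)) (α : Fin n → Bool)
    (s : Finset (QFact n m K)) : Prop :=
  ∃ β : Fin m → Bool, (∀ x ∈ s, FactHolds α β x) ∧
    (∀ j, QFact.Sy j ∉ s → QFact.Ty j ∉ s ∧ QFact.Fy j ∉ s) ∧
    ∀ k, QFact.C k ∈ s → ∃ l ∈ cubes k, falsify n m K l ∈ s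

variable {cubes : Fin K → List ((Fin n ⊕ Fin m) × Bool)} {α : Fin n → Bool}

lemma followerInv_leaderState : FollowerInv cubes α (leaderState n m K α) := by
  refine ⟨fun _ => false, fun x hx => ?_, fun j _ => ?_, fun k hk => ?_⟩
  · obtain ⟨i, rfl | ⟨rfl, h⟩ | ⟨rfl, h⟩⟩ := mem_leaderState.mp hx <;> trivial
  · simp [mem_leaderState]
  · simp [mem_leaderState] at hk

lemma FollowerInv.exec_selY {s : Finset (QFact n m K)} {j : Fin m} {b : Bool}
    (hs : FollowerInv cubes α s) (happ : app s (selY n m K j b)) :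
    FollowerInv cubes α (exec s (selY n m K j b)) := by
  obtain ⟨β, hholds, hsel, hcube⟩ := hs
  have hSy : QFact.Sy j ∉ s := Finset.disjoint_singleton_left.mp happ.2
  obtain ⟨hTy, hFy⟩ := hsel j hSy
  rw [exec_of_del_eq_empty rfl]
  refine ⟨Function.update β j b, fun x hx => ?_, fun j' hj' => ?_, fun k hk => ?_⟩
  · rcases Finset.mem_union.mp hx with hx | hx
    · have hxβ := hholds x hx
      -- `x` is neither `Ty j` nor `Fy j`, so updating `β` at `j` does not affect it
      cases x <;> simp only [FactHolds, Function.update_apply] at hxβ ⊢ <;> grind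
    · cases b <;> simp [selY] at hx <;> rcases hx with rfl | rfl <;> simp [FactHolds]
  · have hne : j' ≠ j := by rintro rfl; cases b <;> simp [selY] at hj'
    cases b <;> simp_all [selY]
  · have hk : QFact.C k ∈ s := by cases b <;> simpa [selY] using hk
    obtain ⟨l, hl, hfl⟩ := hcube k hk
    exact ⟨l, hl, Finset.mem_union_left _ hfl⟩

lemma FollowerInv.exec_valAct {s : Finset (QFact n m K)} {k : Fin K}
    {l : (Fin n ⊕ Fin m) × Bool} (hl : l ∈ cubes k) (hs : FollowerInv cubes α s)
    (happ : app s (valAct n m K k l)) : FollowerInv cubes α (exec s (valAct n m K k l)) := by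
  obtain ⟨β, hholds, hsel, hcube⟩ := hs
  rw [exec_of_del_eq_empty rfl]
  refine ⟨β, fun x hx => ?_, fun j hj => ?_, fun k' hk' => ?_⟩
  · rcases Finset.mem_union.mp hx with hx | hx
    · exact hholds x hx
    · simp only [valAct, Finset.mem_singleton] at hx
      simp [hx, FactHolds]
  · simpa [valAct] using hsel j (by simpa [valAct] using hj)
  · obtain rfl | hne := eq_or_ne k' k
    · exact ⟨l, hl, Finset.mem_union_left _ (Finset.singleton_subset_iff.mp happ.1)⟩
    · obtain ⟨l', hl', hfl'⟩ := hcube k' (by simpa [valAct, hne] using hk')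
      exact ⟨l', hl', Finset.mem_union_left _ hfl'⟩

lemma FollowerInv.execSeq {s : Finset (QFact n m K)} {π : List (Act (QFact n m K))}
    (hs : FollowerInv cubes α s) (happ : appSeq s π)
    (hπ : ∀ a ∈ π, isFollowerAct n m K cubes a) : FollowerInv cubes α (execSeq s π) := by
  refine appSeq.invariant _ _ (fun s a ha happ hs => ?_) hs happ hπ
  obtain ⟨j, b, rfl⟩ | ⟨k, l, hl, rfl⟩ := ha
  · exact hs.exec_selY happ
  · exact hs.exec_valAct hl happ

variable (n m K) in
def followerPlan (β : Fin m → Bool) (g : Fin K → (Fin n ⊕ Fin m) × Bool) :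
    List (Act (QFact n m K)) :=
  List.ofFn (fun j => selY n m K j (β j)) ++ List.ofFn fun k => valAct n m K k (g k)

variable {β : Fin m → Bool} {g : Fin K → (Fin n ⊕ Fin m) × Bool}

lemma isFollowerAct_of_mem_followerPlan (hg : ∀ k, g k ∈ cubes k) :
    ∀ a ∈ followerPlan n m K β g, isFollowerAct n m K cubes a := by
  simp only [followerPlan, List.mem_append, List.mem_ofFn]
  rintro a (⟨j, rfl⟩ | ⟨k, rfl⟩)
  · exact .inl ⟨j, β j, rfl⟩
  · exact .inr ⟨k, g k, hg k, rfl⟩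

lemma appSeq_followerPlan (hg : ∀ k, litVal n m α β (g k) = false) :
    appSeq (leaderState n m K α) (followerPlan n m K β g) := by
  rw [followerPlan, appSeq_append]
  constructor
  · refine appSeq_of_del_eq_empty (by simp [selY]) (by simp [selY]) ?_ ?_
    · simp [selY, mem_leaderState]
    · simp only [List.pairwise_ofFn]
      intro i j hij
      cases β i <;> simp [selY, hij.ne']
  · refine appSeq_of_del_eq_empty (by simp [valAct]) ?_ (by simp [valAct]) (by simp [valAct])
    simp only [List.mem_ofFn, forall_exists_index, forall_apply_eq_imp_iff, valAct,
      Finset.singleton_subset_iff]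
    refine fun k => falsify_mem_of_litVal_eq_false (fun i => ?_) (fun j => ?_) (hg k)
    · refine Finset.mem_of_subset (subset_execSeq_of_del_eq_empty (by simp [selY])) ?_
      cases h : α i <;> simp [mem_leaderState, h]
    · rw [mem_execSeq_of_del_eq_empty (by simp [selY])]
      exact .inr ⟨_, List.mem_ofFn.mpr ⟨j, rfl⟩, by simp [selY]⟩

lemma C_mem_execSeq_followerPlan (s : Finset (QFact n m K)) (k : Fin K) :
    QFact.C k ∈ execSeq s (followerPlan n m K β g) := by
  rw [followerPlan, execSeq_append, mem_execSeq_of_del_eq_empty (by simp [valAct])]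
  exact .inr ⟨_, List.mem_ofFn.mpr ⟨k, rfl⟩, by simp [valAct]⟩

end QBF

/-- In the QBF-reduction Stackelberg task for ∃x∀y φ (φ in DNF, given by `cubes`),
the full leader plan choosing assignment α makes the follower unable to achieve all
cube markers iff α satisfies ∀y φ. -/
theorem qbf_reduction (n m K : ℕ) (cubes : Fin K → List ((Fin n ⊕ Fin m) × Bool))
    (α : Fin n → Bool) :
    (∀ πF, (∀ a ∈ πF, isFollowerAct n m K cubes a) →
      ¬ (appSeq (execSeq (∅ : Finset (QFact n m K))
            (List.ofFn fun i => selX n m K i (α i))) πF ∧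
         (Finset.univ.image (QFact.C (n := n) (m := m) (K := K))) ⊆
           execSeq (execSeq (∅ : Finset (QFact n m K))
             (List.ofFn fun i => selX n m K i (α i))) πF)) ↔
    ∀ β : Fin m → Bool, ∃ k : Fin K, ∀ l ∈ cubes k, litVal n m α β l = true := by
  constructor
  · intro hblocked β
    by_contra! hfalsified
    choose g hg hgβ using hfalsified
    simp only [ne_eq, Bool.not_eq_true] at hgβ
    refine hblocked (followerPlan n m K β g) (isFollowerAct_of_mem_followerPlan hg)
      ⟨appSeq_followerPlan hgβ, fun x hx => ?_⟩
    obtain ⟨k, -, rfl⟩ := Finset.mem_image.mp hx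
    exact C_mem_execSeq_followerPlan _ k
  · rintro hsat πF hπF ⟨happ, hgoal⟩
    obtain ⟨β, hholds, -, hcube⟩ := (followerInv_leaderState (cubes := cubes)).execSeq happ hπF
    obtain ⟨k, hk⟩ := hsat β
    obtain ⟨l, hl, hfl⟩ := hcube k (hgoal (Finset.mem_image_of_mem _ (Finset.mem_univ k)))
    have hlfalse := factHolds_falsify_iff.mp (hholds _ hfl)
    simp [hk l hl] at hlfalse
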